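/- arXiv:2002.01038 — 4 statements merged into one kernel-verified Lean document; each statement's English description precedes it below -/
import Mathlib

section
/- Perturbation bound for polynomial graph filters: Let S, E ∈ ℝ^{N×N} with ‖E‖ ≤ ε in the spectral norm, let S̃ = S + ES + SE, and let H(S) = Σ_{k=0}^{K} h_k S^k be a polynomial graph filter with real coefficients h_k. Then ‖H(S̃) − H(S)‖ ≤ Σ_{k=0}^{K} |h_k| ((1 + 2ε)^k − 1)‖S‖^k. -/
open scoped Matrix.Norms.L2Operator

/-- The polynomial graph filter `H(S) = ∑_{k=0}^{K} h_k S^k`. -/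
noncomputable def polyFilter {N : ℕ} (h : ℕ → ℝ) (K : ℕ)
    (S : Matrix (Fin N) (Fin N) ℝ) : Matrix (Fin N) (Fin N) ℝ :=
  ∑ k ∈ Finset.range (K + 1), h k • S ^ k

lemma pow_pert {N : ℕ} (S E : Matrix (Fin N) (Fin N) ℝ) (ε : ℝ) (hE : ‖E‖ ≤ ε)
    (St : Matrix (Fin N) (Fin N) ℝ) (hSt : St = S + E * S + S * E) (k : ℕ) :
    ‖St ^ k - S ^ k‖ ≤ ((1 + 2 * ε) ^ k - 1) * ‖S‖ ^ k := by
  have hε : (0:ℝ) ≤ ε := le_trans (norm_nonneg E) hE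
  have hS : (0:ℝ) ≤ ‖S‖ := norm_nonneg S
  have hdiff : ‖St - S‖ ≤ 2 * ε * ‖S‖ := by
    have h1 : St - S = E * S + S * E := by rw [hSt]; abel
    rw [h1]
    calc ‖E * S + S * E‖ ≤ ‖E * S‖ + ‖S * E‖ := norm_add_le _ _
      _ ≤ ‖E‖ * ‖S‖ + ‖S‖ * ‖E‖ := add_le_add (norm_mul_le _ _) (norm_mul_le _ _)
      _ ≤ 2 * ε * ‖S‖ := by nlinarith
  have hSt' : ‖St‖ ≤ (1 + 2 * ε) * ‖S‖ := by
    have h2 : St = S + (St - S) := by abel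
    calc ‖St‖ = ‖S + (St - S)‖ := by rw [← h2]
      _ ≤ ‖S‖ + ‖St - S‖ := norm_add_le _ _
      _ ≤ (1 + 2 * ε) * ‖S‖ := by linarith
  have hone : ‖(1 : Matrix (Fin N) (Fin N) ℝ)‖ ≤ 1 := by
    rw [Matrix.cstar_norm_def, map_one]; exact ContinuousLinearMap.norm_id_le
  have hStpow : ∀ m : ℕ, ‖St ^ m‖ ≤ ((1 + 2 * ε) * ‖S‖) ^ m := by
    intro m
    induction m with
    | zero => simpa using hone
    | succ m ih =>
      calc ‖St ^ (m + 1)‖ = ‖St ^ m * St‖ := by rw [pow_succ]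
        _ ≤ ‖St ^ m‖ * ‖St‖ := norm_mul_le _ _
        _ ≤ ((1 + 2 * ε) * ‖S‖) ^ m * ((1 + 2 * ε) * ‖S‖) := by
            apply mul_le_mul ih hSt' (norm_nonneg _) (pow_nonneg (by positivity) m)
        _ = ((1 + 2 * ε) * ‖S‖) ^ (m + 1) := by rw [pow_succ]
  induction k with
  | zero => simp
  | succ k ih =>
    have key : St ^ (k+1) - S ^ (k+1) = St ^ k * (St - S) + (St ^ k - S ^ k) * S := by
      rw [pow_succ, pow_succ]; noncomm_ring
    have hSpow : ‖S ^ k - S ^ k‖ ≤ 0 := by simp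
    calc ‖St ^ (k+1) - S ^ (k+1)‖
        = ‖St ^ k * (St - S) + (St ^ k - S ^ k) * S‖ := by rw [key]
      _ ≤ ‖St ^ k * (St - S)‖ + ‖(St ^ k - S ^ k) * S‖ := norm_add_le _ _
      _ ≤ ‖St ^ k‖ * ‖St - S‖ + ‖St ^ k - S ^ k‖ * ‖S‖ :=
          add_le_add (norm_mul_le _ _) (norm_mul_le _ _)
      _ ≤ ((1 + 2 * ε) * ‖S‖) ^ k * (2 * ε * ‖S‖) + ((1 + 2 * ε) ^ k - 1) * ‖S‖ ^ k * ‖S‖ := by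
          have h3 : (0:ℝ) ≤ ‖St ^ k - S ^ k‖ := norm_nonneg _
          have h4 : (0:ℝ) ≤ ‖St ^ k‖ := norm_nonneg _
          have h5 : (0:ℝ) ≤ ‖St - S‖ := norm_nonneg _
          have h6 := hStpow k
          nlinarith [mul_le_mul h6 hdiff h5 (pow_nonneg (by positivity) k),
            mul_le_mul_of_nonneg_right ih hS]
      _ = ((1 + 2 * ε) ^ (k+1) - 1) * ‖S‖ ^ (k+1) := by rw [mul_pow]; ring

/-- **Perturbation bound for polynomial graph filters.**
If `‖E‖ ≤ ε` and `S̃ = S + ES + SE`, then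
`‖H(S̃) − H(S)‖ ≤ ∑_{k=0}^{K} |h_k| ((1 + 2ε)^k − 1)‖S‖^k`. -/
theorem polynomial_filter_perturbation {N : ℕ}
    (S E : Matrix (Fin N) (Fin N) ℝ) (ε : ℝ) (hE : ‖E‖ ≤ ε)
    (St : Matrix (Fin N) (Fin N) ℝ) (hSt : St = S + E * S + S * E)
    (h : ℕ → ℝ) (K : ℕ) :
    ‖polyFilter h K St - polyFilter h K S‖ ≤
      ∑ k ∈ Finset.range (K + 1), |h k| * ((1 + 2 * ε) ^ k - 1) * ‖S‖ ^ k := by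
  have hdiff : polyFilter h K St - polyFilter h K S
      = ∑ k ∈ Finset.range (K + 1), h k • (St ^ k - S ^ k) := by
    unfold polyFilter
    rw [← Finset.sum_sub_distrib]
    exact Finset.sum_congr rfl fun k _ => by rw [smul_sub]
  rw [hdiff]
  calc ‖∑ k ∈ Finset.range (K + 1), h k • (St ^ k - S ^ k)‖
      ≤ ∑ k ∈ Finset.range (K + 1), ‖h k • (St ^ k - S ^ k)‖ := norm_sum_le _ _
    _ ≤ ∑ k ∈ Finset.range (K + 1), |h k| * ((1 + 2 * ε) ^ k - 1) * ‖S‖ ^ k := by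
        apply Finset.sum_le_sum
        intro k _
        rw [norm_smul, Real.norm_eq_abs, mul_assoc]
        exact mul_le_mul_of_nonneg_left (pow_pert S E ε hE St hSt k) (abs_nonneg _)
end

section
/- GRNN state perturbation bound: Let A, Ã, B, B̃ ∈ ℝ^{N×N} with spectral norms ‖A‖, ‖Ã‖, ‖B‖, ‖B̃‖ ≤ 1, ‖A − Ã‖ ≤ α, and ‖B − B̃‖ ≤ β. Let σ : ℝ → ℝ be 1-Lipschitz with σ(0) = 0, applied entrywise, and let inputs x_s ∈ ℝ^N satisfy ‖x_s‖₂ ≤ 1. Define z_0 = z̃_0 = 0, z_t = σ(A x_t + B z_{t−1}), and z̃_t = σ(Ã x_t + B̃ z̃_{t−1}). Then for all t ≥ 0, ‖z_t − z̃_t‖₂ ≤ t·α + (t(t−1)/2)·β. -/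
open scoped Matrix.Norms.L2Operator

/-- A function `σ : ℝ → ℝ` applied entrywise to a vector in `EuclideanSpace ℝ (Fin N)`. -/
noncomputable def entrywise {N : ℕ} (σ : ℝ → ℝ) (u : EuclideanSpace ℝ (Fin N)) :
    EuclideanSpace ℝ (Fin N) :=
  (EuclideanSpace.equiv (Fin N) ℝ).symm fun i => σ (u i)

/-- Matrix-vector multiplication as a map on `EuclideanSpace ℝ (Fin N)`. -/
noncomputable def mApply {N : ℕ} (A : Matrix (Fin N) (Fin N) ℝ)
    (u : EuclideanSpace ℝ (Fin N)) : EuclideanSpace ℝ (Fin N) :=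
  (EuclideanSpace.equiv (Fin N) ℝ).symm (A.mulVec (EuclideanSpace.equiv (Fin N) ℝ u))

lemma entrywise_lip {N : ℕ} (σ : ℝ → ℝ) (hσ : LipschitzWith 1 σ)
    (u v : EuclideanSpace ℝ (Fin N)) : ‖entrywise σ u - entrywise σ v‖ ≤ ‖u - v‖ := by
  rw [EuclideanSpace.norm_eq, EuclideanSpace.norm_eq]
  apply Real.sqrt_le_sqrt
  apply Finset.sum_le_sum
  intro i _
  have h1 : (entrywise σ u - entrywise σ v) i = σ (u i) - σ (v i) := rfl
  have h2 : (u - v) i = u i - v i := rfl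
  rw [h1, h2]
  have := hσ.dist_le_mul (u i) (v i)
  simp only [NNReal.coe_one, one_mul, Real.dist_eq] at this
  exact pow_le_pow_left₀ (abs_nonneg _) this 2

lemma entrywise_zero {N : ℕ} (σ : ℝ → ℝ) (hσ0 : σ 0 = 0) :
    entrywise σ (0 : EuclideanSpace ℝ (Fin N)) = 0 := by
  ext i; simp [entrywise, hσ0]

lemma mApply_norm_le {N : ℕ} (M : Matrix (Fin N) (Fin N) ℝ)
    (u : EuclideanSpace ℝ (Fin N)) : ‖mApply M u‖ ≤ ‖M‖ * ‖u‖ :=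
  M.l2_opNorm_mulVec u

lemma mApply_sub {N : ℕ} (M M' : Matrix (Fin N) (Fin N) ℝ)
    (u : EuclideanSpace ℝ (Fin N)) :
    mApply (M - M') u = mApply M u - mApply M' u := by
  ext i; simp [mApply, Matrix.sub_mulVec]

lemma mApply_vsub {N : ℕ} (M : Matrix (Fin N) (Fin N) ℝ)
    (u v : EuclideanSpace ℝ (Fin N)) :
    mApply M (u - v) = mApply M u - mApply M v := by
  ext i; simp [mApply, Matrix.mulVec_sub]

/-- **GRNN state perturbation bound.** If `‖A‖, ‖Ã‖, ‖B‖, ‖B̃‖ ≤ 1`, `‖A − Ã‖ ≤ α`,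
`‖B − B̃‖ ≤ β`, `σ` is 1-Lipschitz with `σ(0) = 0` applied entrywise, `‖x_s‖₂ ≤ 1`, and the
states satisfy `z_0 = z̃_0 = 0`, `z_t = σ(A x_t + B z_{t−1})`, `z̃_t = σ(Ã x_t + B̃ z̃_{t−1})`,
then `‖z_t − z̃_t‖₂ ≤ t·α + (t(t−1)/2)·β` for all `t ≥ 0`. -/
theorem grnn_state_perturbation_bound {N : ℕ}
    (A At B Bt : Matrix (Fin N) (Fin N) ℝ) (α β : ℝ)
    (hA : ‖A‖ ≤ 1) (hAt : ‖At‖ ≤ 1) (hB : ‖B‖ ≤ 1) (hBt : ‖Bt‖ ≤ 1)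
    (hAAt : ‖A - At‖ ≤ α) (hBBt : ‖B - Bt‖ ≤ β)
    (σ : ℝ → ℝ) (hσ : LipschitzWith 1 σ) (hσ0 : σ 0 = 0)
    (x : ℕ → EuclideanSpace ℝ (Fin N)) (hx : ∀ s, ‖x s‖ ≤ 1)
    (z zt : ℕ → EuclideanSpace ℝ (Fin N)) (hz0 : z 0 = 0) (hzt0 : zt 0 = 0)
    (hz : ∀ t : ℕ, z (t + 1) = entrywise σ (mApply A (x (t + 1)) + mApply B (z t)))
    (hzt : ∀ t : ℕ, zt (t + 1) = entrywise σ (mApply At (x (t + 1)) + mApply Bt (zt t))) :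
    ∀ t : ℕ, ‖z t - zt t‖ ≤ (t : ℝ) * α + ((t : ℝ) * ((t : ℝ) - 1) / 2) * β := by
  have hα : 0 ≤ α := le_trans (norm_nonneg _) hAAt
  have hβ : 0 ≤ β := le_trans (norm_nonneg _) hBBt
  -- bound on ‖zt t‖
  have hztb : ∀ t : ℕ, ‖zt t‖ ≤ (t : ℝ) := by
    intro t
    induction t with
    | zero => simp [hzt0]
    | succ n ih =>
      rw [hzt n]
      calc ‖entrywise σ (mApply At (x (n + 1)) + mApply Bt (zt n))‖
          = ‖entrywise σ (mApply At (x (n + 1)) + mApply Bt (zt n)) - entrywise σ 0‖ := by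
            rw [entrywise_zero σ hσ0, sub_zero]
        _ ≤ ‖mApply At (x (n + 1)) + mApply Bt (zt n) - 0‖ := entrywise_lip σ hσ _ _
        _ = ‖mApply At (x (n + 1)) + mApply Bt (zt n)‖ := by rw [sub_zero]
        _ ≤ ‖mApply At (x (n + 1))‖ + ‖mApply Bt (zt n)‖ := norm_add_le _ _
        _ ≤ ‖At‖ * ‖x (n + 1)‖ + ‖Bt‖ * ‖zt n‖ := by
            gcongr <;> [exact mApply_norm_le _ _; exact mApply_norm_le _ _]
        _ ≤ 1 * 1 + 1 * (n : ℝ) := by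
            have h1 := mul_le_mul hAt (hx (n+1)) (norm_nonneg _) zero_le_one
            have h2 := mul_le_mul hBt ih (norm_nonneg _) zero_le_one
            linarith
        _ ≤ ((n : ℕ) + 1 : ℕ) := by push_cast; linarith
  intro t
  induction t with
  | zero => simp [hz0, hzt0]
  | succ n ih =>
    rw [hz n, hzt n]
    have key : ‖z (n + 1) - zt (n + 1)‖ ≤ α + β * (n : ℝ) + ‖z n - zt n‖ := by
      rw [hz n, hzt n]
      calc ‖entrywise σ (mApply A (x (n + 1)) + mApply B (z n)) -
            entrywise σ (mApply At (x (n + 1)) + mApply Bt (zt n))‖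
          ≤ ‖(mApply A (x (n + 1)) + mApply B (z n)) -
            (mApply At (x (n + 1)) + mApply Bt (zt n))‖ := entrywise_lip σ hσ _ _
        _ = ‖mApply (A - At) (x (n + 1)) + (mApply (B - Bt) (zt n) + mApply B (z n - zt n))‖ := by
            rw [mApply_sub, mApply_sub, mApply_vsub]; congr 1; abel
        _ ≤ ‖mApply (A - At) (x (n + 1))‖ + (‖mApply (B - Bt) (zt n)‖ + ‖mApply B (z n - zt n)‖) :=
            le_trans (norm_add_le _ _) (by gcongr; exact norm_add_le _ _)
        _ ≤ ‖A - At‖ * ‖x (n + 1)‖ + (‖B - Bt‖ * ‖zt n‖ + ‖B‖ * ‖z n - zt n‖) := by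
            gcongr <;> exact mApply_norm_le _ _
        _ ≤ α + β * (n : ℝ) + ‖z n - zt n‖ := by
            have h1 := mul_le_mul hAAt (hx (n+1)) (norm_nonneg _) hα
            have h2 := mul_le_mul hBBt (hztb n) (norm_nonneg _) hβ
            have h3 := mul_le_mul_of_nonneg_right hB (norm_nonneg (z n - zt n))
            linarith
    rw [← hz n, ← hzt n]
    calc ‖z (n + 1) - zt (n + 1)‖ ≤ α + β * (n : ℝ) + ‖z n - zt n‖ := key
      _ ≤ α + β * (n : ℝ) + ((n : ℝ) * α + ((n : ℝ) * ((n : ℝ) - 1) / 2) * β) := by gcongr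
      _ = ((n + 1 : ℕ) : ℝ) * α + (((n + 1 : ℕ) : ℝ) * (((n + 1 : ℕ) : ℝ) - 1) / 2) * β := by
          push_cast; ring
end

section
/- Permutation equivariance of GRNNs: Let S ∈ ℝ^{N×N}, let P be a permutation matrix, let A(S) = Σ_k a_k S^k and B(S) = Σ_k b_k S^k be polynomial graph filters, and let σ : ℝ → ℝ be applied entrywise. Define z_0 = 0 and z_t = σ(A(S) x_t + B(S) z_{t−1}), and define z̃_0 = 0 and z̃_t = σ(A(P^T S P)(P^T x_t) + B(P^T S P) z̃_{t−1}) on the permuted graph with permuted inputs. Then z̃_t = P^T z_t for all t ≥ 0. -/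
open Matrix

/-- A permutation matrix: the matrix of some permutation of the index set. -/
def IsPermutationMatrix {N : ℕ} (P : Matrix (Fin N) (Fin N) ℝ) : Prop :=
  ∃ e : Equiv.Perm (Fin N), P = e.permMatrix ℝ

lemma perm_mul_transpose {N : ℕ} (e : Equiv.Perm (Fin N)) :
    (e.permMatrix ℝ) * (e.permMatrix ℝ)ᵀ = 1 := by
  unfold Equiv.Perm.permMatrix
  rw [← PEquiv.toMatrix_symm, ← PEquiv.toMatrix_trans, ← Equiv.toPEquiv_symm,
    ← Equiv.toPEquiv_trans]
  simp

lemma polyFilter_conj {N : ℕ} (h : ℕ → ℝ) (K : ℕ)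
    (S P : Matrix (Fin N) (Fin N) ℝ) (hPP : P * Pᵀ = 1) :
    polyFilter h K (Pᵀ * S * P) = Pᵀ * polyFilter h K S * P := by
  have h1 : Pᵀ * P = 1 := mul_eq_one_comm.mp hPP
  have hpow : ∀ k : ℕ, (Pᵀ * S * P) ^ k = Pᵀ * S ^ k * P := by
    intro k
    induction k with
    | zero => simp [pow_zero, Matrix.mul_one, h1]
    | succ k ih =>
      rw [pow_succ, pow_succ, ih]
      calc Pᵀ * S ^ k * P * (Pᵀ * S * P) = Pᵀ * S ^ k * (P * Pᵀ) * S * P := by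
            noncomm_ring
        _ = Pᵀ * (S ^ k * S) * P := by rw [hPP]; noncomm_ring
  unfold polyFilter
  simp only [hpow, Matrix.sum_mul, Matrix.mul_sum]
  congr 1; ext k
  rw [Matrix.mul_smul, Matrix.smul_mul]

lemma permMatrix_mulVec {N : ℕ} (e : Equiv.Perm (Fin N)) (v : Fin N → ℝ) :
    (e.permMatrix ℝ).mulVec v = fun i => v (e i) := by
  ext i
  simp [Matrix.mulVec, dotProduct, Equiv.Perm.permMatrix, PEquiv.toMatrix_apply,
    Equiv.toPEquiv_apply, eq_comm]

lemma permMatrix_transpose {N : ℕ} (e : Equiv.Perm (Fin N)) :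
    (e.permMatrix ℝ)ᵀ = (e⁻¹).permMatrix ℝ := by
  unfold Equiv.Perm.permMatrix
  rw [← PEquiv.toMatrix_symm, ← Equiv.toPEquiv_symm]
  rfl

/-- **Permutation equivariance of GRNNs.**
If `z_0 = 0`, `z_t = σ(A(S) x_t + B(S) z_{t−1})`, and on the permuted graph with permuted
inputs `z̃_0 = 0`, `z̃_t = σ(A(Pᵀ S P)(Pᵀ x_t) + B(Pᵀ S P) z̃_{t−1})`, then `z̃_t = Pᵀ z_t`
for all `t ≥ 0`. -/
theorem grnn_permutation_equivariant {N : ℕ}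
    (S : Matrix (Fin N) (Fin N) ℝ) (P : Matrix (Fin N) (Fin N) ℝ)
    (hP : IsPermutationMatrix P)
    (a b : ℕ → ℝ) (K : ℕ) (σ : ℝ → ℝ)
    (x : ℕ → (Fin N → ℝ))
    (z zt : ℕ → (Fin N → ℝ)) (hz0 : z 0 = 0) (hzt0 : zt 0 = 0)
    (hz : ∀ t : ℕ, z (t + 1) =
      fun i => σ (((polyFilter a K S).mulVec (x (t + 1)) +
        (polyFilter b K S).mulVec (z t)) i))
    (hzt : ∀ t : ℕ, zt (t + 1) =
      fun i => σ (((polyFilter a K (Pᵀ * S * P)).mulVec (Pᵀ.mulVec (x (t + 1))) +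
        (polyFilter b K (Pᵀ * S * P)).mulVec (zt t)) i)) :
    ∀ t : ℕ, zt t = Pᵀ.mulVec (z t) := by
  obtain ⟨e, rfl⟩ := hP
  have hPP : (e.permMatrix ℝ) * (e.permMatrix ℝ)ᵀ = 1 := perm_mul_transpose e
  set P := e.permMatrix ℝ with hPdef
  have hPtv : ∀ v : Fin N → ℝ, Pᵀ.mulVec v = fun i => v (e⁻¹ i) := by
    intro v
    rw [hPdef, permMatrix_transpose, permMatrix_mulVec]
  have key : ∀ (h : ℕ → ℝ) (v : Fin N → ℝ),
      (polyFilter h K (Pᵀ * S * P)).mulVec (Pᵀ.mulVec v)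
        = Pᵀ.mulVec ((polyFilter h K S).mulVec v) := by
    intro h v
    rw [polyFilter_conj h K S P hPP, Matrix.mulVec_mulVec]
    have hM : Pᵀ * polyFilter h K S * P * Pᵀ = Pᵀ * polyFilter h K S := by
      rw [mul_assoc, hPP, mul_one]
    rw [hM, ← Matrix.mulVec_mulVec]
  intro t
  induction t with
  | zero => simp [hz0, hzt0]
  | succ t ih =>
    rw [hzt t, hz t, ih, key, key, ← Matrix.mulVec_add, hPtv, hPtv]
end

section
/- Time-gated GRNN state perturbation bound: Let A, Ã, B, B̃ ∈ ℝ^{N×N} with spectral norms at most 1, ‖A − Ã‖ ≤ α, ‖B − B̃‖ ≤ β; let σ : ℝ → ℝ be 1-Lipschitz with σ(0) = 0, applied entrywise; let inputs satisfy ‖x_s‖₂ ≤ 1; and let gate scalars q̂_s, q̃̂_s, q̌_s, q̃̌_s ∈ [0,1] satisfy |q̂_s − q̃̂_s| ≤ η and |q̌_s − q̃̌_s| ≤ η for all s. Define z_0 = z̃_0 = 0, z_t = σ(q̂_t A x_t + q̌_t B z_{t−1}), and z̃_t = σ(q̃̂_t Ã x_t + q̃̌_t B̃ z̃_{t−1}).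 Then for all t ≥ 0, ‖z_t − z̃_t‖₂ ≤ t(α + η) + (t(t−1)/2)(β + η). -/
open scoped Matrix.Norms.L2Operator

lemma mApply_bound {N : ℕ} {A : Matrix (Fin N) (Fin N) ℝ} {u : EuclideanSpace ℝ (Fin N)}
    {a c : ℝ} (hA : ‖A‖ ≤ a) (hu : ‖u‖ ≤ c) (hc : 0 ≤ c) :
    ‖mApply A u‖ ≤ a * c :=
  (Matrix.l2_opNorm_mulVec A u).trans
    (mul_le_mul hA hu (norm_nonneg _) ((norm_nonneg A).trans hA))

lemma smul_vec_bound {N : ℕ} {q c d : ℝ} {w : EuclideanSpace ℝ (Fin N)}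
    (hq : |q| ≤ d) (hw : ‖w‖ ≤ c) (hc : 0 ≤ c) : ‖q • w‖ ≤ d * c := by
  rw [norm_smul, Real.norm_eq_abs]
  exact mul_le_mul hq hw (norm_nonneg _) ((abs_nonneg q).trans hq)

lemma mApply_sub_left {N : ℕ} (A B : Matrix (Fin N) (Fin N) ℝ) (u : EuclideanSpace ℝ (Fin N)) :
    mApply (A - B) u = mApply A u - mApply B u := by
  simp [mApply, Matrix.sub_mulVec]

lemma mApply_sub_right {N : ℕ} (A : Matrix (Fin N) (Fin N) ℝ) (u v : EuclideanSpace ℝ (Fin N)) :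
    mApply A (u - v) = mApply A u - mApply A v := by
  simp [mApply, Matrix.mulVec_sub]

lemma entrywise_norm_le {N : ℕ} (σ : ℝ → ℝ) (hσ : LipschitzWith 1 σ) (hσ0 : σ 0 = 0)
    (u : EuclideanSpace ℝ (Fin N)) : ‖entrywise σ u‖ ≤ ‖u‖ := by
  have := entrywise_lip σ hσ u 0
  rwa [entrywise_zero σ hσ0, sub_zero, sub_zero] at this

/-- **Time-gated GRNN state perturbation bound.** With spectral norms of `A, Ã, B, B̃` at
most 1, `‖A − Ã‖ ≤ α`, `‖B − B̃‖ ≤ β`, gates in `[0,1]` with `|q̂_s − q̃̂_s| ≤ η`,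
`|q̌_s − q̃̌_s| ≤ η`, `σ` 1-Lipschitz with `σ(0) = 0`, inputs with `‖x_s‖₂ ≤ 1`, and
states `z_0 = z̃_0 = 0`, `z_t = σ(q̂_t A x_t + q̌_t B z_{t−1})`,
`z̃_t = σ(q̃̂_t Ã x_t + q̃̌_t B̃ z̃_{t−1})`, then
`‖z_t − z̃_t‖₂ ≤ t(α + η) + (t(t−1)/2)(β + η)` for all `t ≥ 0`. -/
theorem time_gated_grnn_state_perturbation_bound {N : ℕ}
    (A At B Bt : Matrix (Fin N) (Fin N) ℝ) (α β η : ℝ)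
    (hA : ‖A‖ ≤ 1) (hAt : ‖At‖ ≤ 1) (hB : ‖B‖ ≤ 1) (hBt : ‖Bt‖ ≤ 1)
    (hAAt : ‖A - At‖ ≤ α) (hBBt : ‖B - Bt‖ ≤ β)
    (σ : ℝ → ℝ) (hσ : LipschitzWith 1 σ) (hσ0 : σ 0 = 0)
    (x : ℕ → EuclideanSpace ℝ (Fin N)) (hx : ∀ s, ‖x s‖ ≤ 1)
    (qh qht qc qct : ℕ → ℝ)
    (hqh : ∀ s, qh s ∈ Set.Icc (0 : ℝ) 1) (hqht : ∀ s, qht s ∈ Set.Icc (0 : ℝ) 1)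
    (hqc : ∀ s, qc s ∈ Set.Icc (0 : ℝ) 1) (hqct : ∀ s, qct s ∈ Set.Icc (0 : ℝ) 1)
    (hqhη : ∀ s, |qh s - qht s| ≤ η) (hqcη : ∀ s, |qc s - qct s| ≤ η)
    (z zt : ℕ → EuclideanSpace ℝ (Fin N)) (hz0 : z 0 = 0) (hzt0 : zt 0 = 0)
    (hz : ∀ t : ℕ, z (t + 1) =
      entrywise σ (qh (t + 1) • mApply A (x (t + 1)) + qc (t + 1) • mApply B (z t)))
    (hzt : ∀ t : ℕ, zt (t + 1) =
      entrywise σ (qht (t + 1) • mApply At (x (t + 1)) + qct (t + 1) • mApply Bt (zt t))) :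
    ∀ t : ℕ, ‖z t - zt t‖ ≤
      (t : ℝ) * (α + η) + ((t : ℝ) * ((t : ℝ) - 1) / 2) * (β + η) := by
  have hα : 0 ≤ α := (norm_nonneg _).trans hAAt
  have hβ : 0 ≤ β := (norm_nonneg _).trans hBBt
  have hη : 0 ≤ η := (abs_nonneg _).trans (hqhη 0)
  have habs : ∀ s, |qh s| ≤ 1 := fun s => abs_le.2 ⟨by linarith [(hqh s).1], (hqh s).2⟩
  have habst : ∀ s, |qht s| ≤ 1 := fun s => abs_le.2 ⟨by linarith [(hqht s).1], (hqht s).2⟩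
  have hcabs : ∀ s, |qc s| ≤ 1 := fun s => abs_le.2 ⟨by linarith [(hqc s).1], (hqc s).2⟩
  have hcabst : ∀ s, |qct s| ≤ 1 := fun s => abs_le.2 ⟨by linarith [(hqct s).1], (hqct s).2⟩
  -- bound on ‖z t‖
  have hzn : ∀ t : ℕ, ‖z t‖ ≤ (t : ℝ) := by
    intro t
    induction t with
    | zero => simp [hz0]
    | succ t ih =>
      have ht : (0:ℝ) ≤ t := Nat.cast_nonneg t
      rw [hz t]
      refine (entrywise_norm_le σ hσ hσ0 _).trans ?_
      refine (norm_add_le _ _).trans ?_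
      have h1 : ‖qh (t+1) • mApply A (x (t+1))‖ ≤ 1 * (1 * 1) :=
        smul_vec_bound (habs _) (mApply_bound hA (hx _) zero_le_one) (by norm_num)
      have h2 : ‖qc (t+1) • mApply B (z t)‖ ≤ 1 * (1 * (t : ℝ)) :=
        smul_vec_bound (hcabs _) (mApply_bound hB ih ht) (by linarith)
      push_cast
      linarith
  intro t
  induction t with
  | zero => simp [hz0, hzt0]
  | succ t ih =>
    have ht : (0:ℝ) ≤ t := Nat.cast_nonneg t
    have key : qh (t+1) • mApply A (x (t+1)) + qc (t+1) • mApply B (z t)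
        - (qht (t+1) • mApply At (x (t+1)) + qct (t+1) • mApply Bt (zt t))
        = (qh (t+1) - qht (t+1)) • mApply A (x (t+1))
          + qht (t+1) • (mApply A (x (t+1)) - mApply At (x (t+1)))
          + ((qc (t+1) - qct (t+1)) • mApply B (z t)
          + (qct (t+1) • (mApply B (z t) - mApply Bt (z t))
          + qct (t+1) • (mApply Bt (z t) - mApply Bt (zt t)))) := by
      rw [smul_sub, smul_sub, smul_sub, sub_smul, sub_smul]
      abel
    have e1 : ‖(qh (t+1) - qht (t+1)) • mApply A (x (t+1))‖ ≤ η * (1 * 1) :=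
      smul_vec_bound (hqhη _) (mApply_bound hA (hx _) zero_le_one) (by norm_num)
    have e2 : ‖qht (t+1) • (mApply A (x (t+1)) - mApply At (x (t+1)))‖ ≤ 1 * (α * 1) := by
      rw [← mApply_sub_left]
      exact smul_vec_bound (habst _) (mApply_bound hAAt (hx _) zero_le_one)
        (by positivity)
    have e3 : ‖(qc (t+1) - qct (t+1)) • mApply B (z t)‖ ≤ η * (1 * (t : ℝ)) :=
      smul_vec_bound (hqcη _) (mApply_bound hB (hzn t) ht) (by linarith)
    have e4 : ‖qct (t+1) • (mApply B (z t) - mApply Bt (z t))‖ ≤ 1 * (β * (t : ℝ)) := by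
      rw [← mApply_sub_left]
      exact smul_vec_bound (hcabst _) (mApply_bound hBBt (hzn t) ht) (by positivity)
    have e5 : ‖qct (t+1) • (mApply Bt (z t) - mApply Bt (zt t))‖ ≤ 1 * (1 * ‖z t - zt t‖) := by
      rw [← mApply_sub_right]
      exact smul_vec_bound (hcabst _) (mApply_bound hBt le_rfl (norm_nonneg _))
        (by positivity)
    have step : ‖z (t+1) - zt (t+1)‖ ≤ (α + η) + (t : ℝ) * (β + η) + ‖z t - zt t‖ := by
      rw [hz t, hzt t]
      refine (entrywise_lip σ hσ _ _).trans ?_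
      rw [key]
      have h1 := norm_add_le ((qh (t+1) - qht (t+1)) • mApply A (x (t+1))
          + qht (t+1) • (mApply A (x (t+1)) - mApply At (x (t+1))))
        ((qc (t+1) - qct (t+1)) • mApply B (z t)
          + (qct (t+1) • (mApply B (z t) - mApply Bt (z t))
          + qct (t+1) • (mApply Bt (z t) - mApply Bt (zt t))))
      have h2 := norm_add_le ((qh (t+1) - qht (t+1)) • mApply A (x (t+1)))
        (qht (t+1) • (mApply A (x (t+1)) - mApply At (x (t+1))))
      have h3 := norm_add_le ((qc (t+1) - qct (t+1)) • mApply B (z t))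
        (qct (t+1) • (mApply B (z t) - mApply Bt (z t))
          + qct (t+1) • (mApply Bt (z t) - mApply Bt (zt t)))
      have h4 := norm_add_le (qct (t+1) • (mApply B (z t) - mApply Bt (z t)))
        (qct (t+1) • (mApply Bt (z t) - mApply Bt (zt t)))
      linarith
    refine step.trans ?_
    push_cast
    nlinarith [ih]
end
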